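/- Let C and F be finite sets with |C| ≥ 2, let p be a probability mass function on C × F, fix f ∈ F, and let ĉ be a maximizer of c ↦ p(c, f). Define δ = p(ĉ, f) − max_{c ∈ C \ {ĉ}} p(c, f) and ε_glob = δ/(1 + δ). Then for every ε ∈ [0,1]: ĉ is the unique maximizer of c ↦ p'(c, f) for all p' in the ε-contamination M_{p,ε} if and only if ε < ε_glob. In particular, ε_glob is the smallest ε ∈ [0,1] for which the prediction ĉ fails to be robust w.r.t. M_{p,ε}. -/

import Mathlib

/-- A probability mass function on a finite set: nonnegative and sums to one. -/
def IsPMF {X : Type*} [Fintype X] (p : X → ℝ) : Prop :=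
  (∀ x, 0 ≤ p x) ∧ ∑ x, p x = 1

/-- The ε-contamination of a mass function `p`. -/
def contam {X : Type*} [Fintype X] (p : X → ℝ) (ε : ℝ) : Set (X → ℝ) :=
  {q | ∃ p' : X → ℝ, IsPMF p' ∧ q = fun x => (1 - ε) * p x + ε * p' x}

/-!
Against the competitor `c`, the worst contamination puts all of its mass on `(c, f)`, which
leaves `ĉ` ahead iff `ε < (1 - ε) (p(ĉ, f) - p(c, f))`. Over all `c ≠ ĉ` the binding
competitor is the runner-up, so robustness is `ε < (1 - ε) δ`, i.e. `ε < δ / (1 + δ)`.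
-/

open Finset

lemma IsPMF.le_one {X : Type*} [Fintype X] {p : X → ℝ} (hp : IsPMF p) (x : X) : p x ≤ 1 :=
  hp.2 ▸ single_le_sum (fun y _ => hp.1 y) (mem_univ x)

lemma isPMF_pi_single {X : Type*} [Fintype X] [DecidableEq X] (x : X) :
    IsPMF (Pi.single x (1 : ℝ)) :=
  ⟨fun y => by by_cases h : y = x <;> simp [h], by simp⟩

lemma forall_mem_contam_lt_iff {X : Type*} [Fintype X] {p : X → ℝ} {ε : ℝ} (hε : 0 ≤ ε)
    {x y : X} (hxy : x ≠ y) :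
    (∀ q ∈ contam p ε, q x < q y) ↔ ε < (1 - ε) * (p y - p x) := by
  classical
  constructor
  · intro h
    have := h _ ⟨Pi.single x 1, isPMF_pi_single x, rfl⟩
    simp only [Pi.single_eq_same, Pi.single_eq_of_ne hxy.symm] at this
    linarith
  · rintro h q ⟨p', hp', rfl⟩
    have : ε * (p' x - p' y) ≤ ε :=
      mul_le_of_le_one_right hε (by linarith [hp'.le_one x, hp'.1 y])
    simp only
    linarith

lemma exists_ne_eq_sSup {C : Type*} [Fintype C] (hC : 2 ≤ Fintype.card C) (g : C → ℝ) (c₀ : C) :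
    ∃ c₁, c₁ ≠ c₀ ∧ sSup {y | ∃ c, c ≠ c₀ ∧ y = g c} = g c₁ ∧
      ∀ c, c ≠ c₀ → g c ≤ sSup {y | ∃ c, c ≠ c₀ ∧ y = g c} := by
  set S := {y | ∃ c, c ≠ c₀ ∧ y = g c}
  obtain ⟨c, hc⟩ := Fintype.exists_ne_of_one_lt_card hC c₀
  have hfin : S.Finite := (Set.finite_range g).subset (by rintro _ ⟨c, -, rfl⟩; exact ⟨c, rfl⟩)
  obtain ⟨c₁, hc₁, hsup⟩ := Set.Nonempty.csSup_mem (s := S) ⟨g c, c, hc, rfl⟩ hfin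
  exact ⟨c₁, hc₁, hsup, fun c hc => le_csSup hfin.bddAbove ⟨c, hc, rfl⟩⟩

lemma forall_ne_lt_mul_sub_iff {C : Type*} [Fintype C] (hC : 2 ≤ Fintype.card C) (g : C → ℝ)
    (c₀ : C) {ε : ℝ} (hε : ε ≤ 1) :
    (∀ c, c ≠ c₀ → ε < (1 - ε) * (g c₀ - g c)) ↔
      ε < (1 - ε) * (g c₀ - sSup {y | ∃ c, c ≠ c₀ ∧ y = g c}) := by
  obtain ⟨c₁, hc₁, hsup, hle⟩ := exists_ne_eq_sSup hC g c₀
  refine ⟨fun h => hsup ▸ h c₁ hc₁, fun h c hc => ?_⟩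
  have : (1 - ε) * (g c₀ - sSup {y | ∃ c, c ≠ c₀ ∧ y = g c}) ≤ (1 - ε) * (g c₀ - g c) :=
    mul_le_mul_of_nonneg_left (by linarith [hle c hc]) (by linarith)
  linarith

lemma lt_one_sub_mul_iff_lt_div {ε δ : ℝ} (hδ : 0 < 1 + δ) :
    ε < (1 - ε) * δ ↔ ε < δ / (1 + δ) := by
  rw [lt_div_iff₀ hδ]
  constructor <;> intro <;> linarith

lemma isLeast_not_of_forall_iff_lt {P : ℝ → Prop} {t : ℝ} (ht : t ∈ Set.Icc (0 : ℝ) 1)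
    (hP : ∀ ε ∈ Set.Icc (0 : ℝ) 1, P ε ↔ ε < t) :
    IsLeast {ε | ε ∈ Set.Icc (0 : ℝ) 1 ∧ ¬ P ε} t :=
  ⟨⟨ht, fun h => lt_irrefl t ((hP t ht).1 h)⟩,
    fun _ ⟨hε, hnot⟩ => not_lt.1 fun h => hnot ((hP _ hε).2 h)⟩

theorem stmt4_general {C F : Type*} [Fintype C] [Fintype F] (hC : 2 ≤ Fintype.card C)
    (p : C × F → ℝ) (f : F) (c₀ : C)
    (hmax : ∀ c : C, p (c, f) ≤ p (c₀, f)) :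
    let δ : ℝ := p (c₀, f) - sSup {y : ℝ | ∃ c : C, c ≠ c₀ ∧ y = p (c, f)}
    (∀ ε ∈ Set.Icc (0 : ℝ) 1,
        ((∀ q ∈ contam p ε, ∀ c : C, c ≠ c₀ → q (c, f) < q (c₀, f)) ↔ ε < δ / (1 + δ))) ∧
      IsLeast {ε : ℝ | ε ∈ Set.Icc (0 : ℝ) 1 ∧
          ¬ (∀ q ∈ contam p ε, ∀ c : C, c ≠ c₀ → q (c, f) < q (c₀, f))}
        (δ / (1 + δ)) := by
  intro δ
  have hδ : 0 ≤ δ := by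
    obtain ⟨c₁, -, hsup, -⟩ := exists_ne_eq_sSup hC (fun c => p (c, f)) c₀
    simp only [δ, hsup, sub_nonneg, hmax]
  have robust_iff : ∀ ε ∈ Set.Icc (0 : ℝ) 1,
      ((∀ q ∈ contam p ε, ∀ c : C, c ≠ c₀ → q (c, f) < q (c₀, f)) ↔ ε < δ / (1 + δ)) := by
    rintro ε ⟨hε₀, hε₁⟩
    calc (∀ q ∈ contam p ε, ∀ c : C, c ≠ c₀ → q (c, f) < q (c₀, f))
        ↔ ∀ c : C, c ≠ c₀ → ∀ q ∈ contam p ε, q (c, f) < q (c₀, f) :=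
          ⟨fun h c hc q hq => h q hq c hc, fun h q hq c hc => h c hc q hq⟩
      _ ↔ ∀ c : C, c ≠ c₀ → ε < (1 - ε) * (p (c₀, f) - p (c, f)) :=
          forall₂_congr fun c hc => forall_mem_contam_lt_iff hε₀ (by simpa using hc)
      _ ↔ ε < (1 - ε) * δ := forall_ne_lt_mul_sub_iff hC (fun c => p (c, f)) c₀ hε₁
      _ ↔ ε < δ / (1 + δ) := lt_one_sub_mul_iff_lt_div (by linarith)
  have hmem : δ / (1 + δ) ∈ Set.Icc (0 : ℝ) 1 :=
    ⟨by positivity, (div_le_one (by linarith)).2 (by linarith)⟩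
  exact ⟨robust_iff, isLeast_not_of_forall_iff_lt hmem robust_iff⟩

theorem stmt4 {C F : Type*} [Fintype C] [Fintype F] (hC : 2 ≤ Fintype.card C)
    (p : C × F → ℝ) (hp : IsPMF p) (f : F) (c₀ : C)
    (hmax : ∀ c : C, p (c, f) ≤ p (c₀, f)) :
    let δ : ℝ := p (c₀, f) - sSup {y : ℝ | ∃ c : C, c ≠ c₀ ∧ y = p (c, f)}
    (∀ ε ∈ Set.Icc (0 : ℝ) 1,
        ((∀ q ∈ contam p ε, ∀ c : C, c ≠ c₀ → q (c, f) < q (c₀, f)) ↔ ε < δ / (1 + δ))) ∧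
      IsLeast {ε : ℝ | ε ∈ Set.Icc (0 : ℝ) 1 ∧
          ¬ (∀ q ∈ contam p ε, ∀ c : C, c ≠ c₀ → q (c, f) < q (c₀, f))}
        (δ / (1 + δ)) :=
  stmt4_general hC p f c₀ hmax
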